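/- arXiv:1201.3223 — 2 statements merged into one kernel-verified Lean document; each statement's English description precedes it below -/
import Mathlib

section
/- Let Q_0, Q_1, ..., Q_p be pairwise commuting smooth vector fields on a manifold, and let Φ be a smooth function with Q_0 Φ ≠ 0. Then the vector fields Q^Φ_s := Q_s − ((Q_s Φ)/(Q_0 Φ)) Q_0, s = 1,...,p, pairwise commute; in particular they generate an involutive distribution. -/
/-- Action of a vector field `X` on a smooth function `f`. -/
noncomputable def vact {E : Type*} [NormedAddCommGroup E] [NormedSpace ℝ E]
    (X : E → E) (f : E → ℝ) (z : E) : ℝ :=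
  fderiv ℝ f z (X z)

/-- Lie bracket of two vector fields on an open subset of a real normed space. -/
noncomputable def vbr {E : Type*} [NormedAddCommGroup E] [NormedSpace ℝ E]
    (X Y : E → E) (z : E) : E :=
  fderiv ℝ Y z (X z) - fderiv ℝ X z (Y z)

section Aux

variable {E : Type*} [NormedAddCommGroup E] [NormedSpace ℝ E]

lemma aux_diff_div {b a : E → ℝ} {z : E} (hb : DifferentiableAt ℝ b z)
    (ha : DifferentiableAt ℝ a z) (hz : a z ≠ 0) :
    DifferentiableAt ℝ (fun w => b w / a w) z := by
  simp only [div_eq_mul_inv]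
  exact hb.mul (ha.inv hz)

lemma aux_fderiv_div {b a : E → ℝ} {z : E} (hb : DifferentiableAt ℝ b z)
    (ha : DifferentiableAt ℝ a z) (hz : a z ≠ 0) (v : E) :
    fderiv ℝ (fun w => b w / a w) z v
      = (fderiv ℝ b z v * a z - b z * fderiv ℝ a z v) / (a z) ^ 2 := by
  have h1 : (fun w => b w / a w) = fun w => b w * (a w)⁻¹ := by
    funext w; rw [div_eq_mul_inv]
  have hinv : DifferentiableAt ℝ (fun w => (a w)⁻¹) z := ha.inv hz
  have h2 : fderiv ℝ (fun w => (a w)⁻¹) z v = -(a z ^ 2)⁻¹ * fderiv ℝ a z v := by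
    have he : (fun w => (a w)⁻¹) = (fun x : ℝ => x⁻¹) ∘ a := rfl
    rw [he, fderiv_comp z (differentiableAt_inv hz) ha]
    simp [fderiv_inv, mul_comm]
  rw [h1, fderiv_fun_mul hb hinv]
  simp only [ContinuousLinearMap.add_apply, ContinuousLinearMap.smul_apply, smul_eq_mul, h2]
  field_simp
  ring

end Aux

/-- If `Q_0, …, Q_p` pairwise commute and `Q_0 Φ ≠ 0`, then the vector fields
`Q^Φ_s = Q_s − ((Q_s Φ)/(Q_0 Φ)) Q_0` pairwise commute (hence generate an involutive
distribution). -/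
theorem stmt2 {N p : ℕ} (U : Set (Fin N → ℝ)) (hU : IsOpen U)
    (Q : Fin (p + 1) → (Fin N → ℝ) → (Fin N → ℝ))
    (hQ : ∀ i, ContDiffOn ℝ (⊤ : ℕ∞) (Q i) U)
    (hcomm : ∀ i j, ∀ z ∈ U, vbr (Q i) (Q j) z = 0)
    (Φ : (Fin N → ℝ) → ℝ) (hΦ : ContDiffOn ℝ (⊤ : ℕ∞) Φ U)
    (h0 : ∀ z ∈ U, vact (Q 0) Φ z ≠ 0) :
    ∀ s s' : Fin p, ∀ z ∈ U,
      vbr (fun w => Q s.succ w - (vact (Q s.succ) Φ w / vact (Q 0) Φ w) • Q 0 w)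
          (fun w => Q s'.succ w - (vact (Q s'.succ) Φ w / vact (Q 0) Φ w) • Q 0 w) z
        = 0 := by
  intro s s' z hz
  have hUz : U ∈ nhds z := hU.mem_nhds hz
  have hΦz : ContDiffAt ℝ (⊤ : ℕ∞) Φ z := hΦ.contDiffAt hUz
  have hQz : ∀ i, ContDiffAt ℝ (⊤ : ℕ∞) (Q i) z := fun i => (hQ i).contDiffAt hUz
  have hQd : ∀ i, DifferentiableAt ℝ (Q i) z := fun i =>
    (hQz i).differentiableAt (by simp)
  have hΦd : DifferentiableAt ℝ Φ z := hΦz.differentiableAt (by simp)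
  have hΦ' : DifferentiableAt ℝ (fderiv ℝ Φ) z :=
    (hΦz.fderiv_right (m := 1) (WithTop.coe_le_coe.mpr le_top)).differentiableAt one_ne_zero
  have haz : vact (Q 0) Φ z ≠ 0 := h0 z hz
  -- differentiability of the coefficient functions b i := Q_i Φ
  have hb : ∀ i, DifferentiableAt ℝ (vact (Q i) Φ) z := fun i =>
    hΦ'.clm_apply (hQd i)
  -- derivative of b i
  have hbd : ∀ i, ∀ v, fderiv ℝ (vact (Q i) Φ) z v
      = fderiv ℝ (fderiv ℝ Φ) z v (Q i z) + fderiv ℝ Φ z (fderiv ℝ (Q i) z v) := by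
    intro i v
    have he : vact (Q i) Φ = fun w => (fderiv ℝ Φ w) (Q i w) := rfl
    rw [he, fderiv_clm_apply hΦ' (hQd i)]
    simp [add_comm]
  -- symmetry of the second derivative
  have hsym : IsSymmSndFDerivAt ℝ Φ z := hΦz.isSymmSndFDerivAt (by simp only [minSmoothness_of_isRCLikeNormedField]; exact WithTop.coe_le_coe.mpr le_top)
  -- commutation of the Q i on first derivatives
  have hQc : ∀ i j, fderiv ℝ (Q j) z (Q i z) = fderiv ℝ (Q i) z (Q j z) := by
    intro i j
    have h := hcomm i j z hz
    rw [vbr, sub_eq_zero] at h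
    exact h
  -- symmetry of Q_i (Q_j Φ)
  have hc : ∀ i j, fderiv ℝ (vact (Q j) Φ) z (Q i z)
      = fderiv ℝ (vact (Q i) Φ) z (Q j z) := by
    intro i j
    rw [hbd j (Q i z), hbd i (Q j z), hsym (Q i z) (Q j z), hQc i j]
  -- differentiability of the quotients
  have hfdiff : DifferentiableAt ℝ
      (fun w => vact (Q s.succ) Φ w / vact (Q 0) Φ w) z :=
    aux_diff_div (hb _) (hb 0) haz
  have hgdiff : DifferentiableAt ℝ
      (fun w => vact (Q s'.succ) Φ w / vact (Q 0) Φ w) z :=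
    aux_diff_div (hb _) (hb 0) haz
  -- derivatives of the modified fields
  have hFd : HasFDerivAt
      (fun w => Q s.succ w - (vact (Q s.succ) Φ w / vact (Q 0) Φ w) • Q 0 w)
      (fderiv ℝ (Q s.succ) z
        - ((vact (Q s.succ) Φ z / vact (Q 0) Φ z) • fderiv ℝ (Q 0) z
          + (fderiv ℝ (fun w => vact (Q s.succ) Φ w / vact (Q 0) Φ w) z).smulRight
              (Q 0 z))) z :=
    (hQd s.succ).hasFDerivAt.sub (hfdiff.hasFDerivAt.smul (hQd 0).hasFDerivAt)
  have hGd : HasFDerivAt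
      (fun w => Q s'.succ w - (vact (Q s'.succ) Φ w / vact (Q 0) Φ w) • Q 0 w)
      (fderiv ℝ (Q s'.succ) z
        - ((vact (Q s'.succ) Φ z / vact (Q 0) Φ z) • fderiv ℝ (Q 0) z
          + (fderiv ℝ (fun w => vact (Q s'.succ) Φ w / vact (Q 0) Φ w) z).smulRight
              (Q 0 z))) z :=
    (hQd s'.succ).hasFDerivAt.sub (hgdiff.hasFDerivAt.smul (hQd 0).hasFDerivAt)
  rw [vbr, hFd.fderiv, hGd.fderiv]
  simp only [ContinuousLinearMap.sub_apply, ContinuousLinearMap.add_apply,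
    ContinuousLinearMap.smul_apply, ContinuousLinearMap.smulRight_apply,
    map_sub, map_smul]
  rw [aux_fderiv_div (hb s.succ) (hb 0) haz (Q s'.succ z),
    aux_fderiv_div (hb s.succ) (hb 0) haz (Q 0 z),
    aux_fderiv_div (hb s'.succ) (hb 0) haz (Q s.succ z),
    aux_fderiv_div (hb s'.succ) (hb 0) haz (Q 0 z),
    hQc s.succ s'.succ, hQc 0 s.succ, hQc 0 s'.succ,
    hc s'.succ s.succ, hc 0 s.succ, hc 0 s'.succ]
  match_scalars <;> field_simp <;> ring
end

section
/- Let Φ be a smooth function of (x_1,...,x_n,u) with Φ_u ≠ 0, set η^s = −Φ_s/Φ_u for s = 1,...,p, and let G be any smooth function of (x,u). Then for each s, G_s + η^s G_u − η^s_n − η^s_u G = (1/Φ_u) (∂_s − (Φ_s/Φ_u) ∂_u)(Φ_n + Φ_u G), where subscript n denotes ∂/∂x_n and subscript u denotes ∂/∂u. Consequently, the system η^s_n + η^s_u G = G_s + η^s G_u (s = 1,...,p) holds if and only if the function Ψ := Φ_n + Φ_u G satisfies (∂_s − (Φ_s/Φ_u)∂_u)Ψ = 0 for all s. -/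
set_option maxHeartbeats 1000000


noncomputable def pdx {n : ℕ} (s : Fin n) (f : (Fin n → ℝ) × ℝ → ℝ)
    (z : (Fin n → ℝ) × ℝ) : ℝ :=
  fderiv ℝ f z (Pi.single s 1, 0)

noncomputable def pdu {n : ℕ} (f : (Fin n → ℝ) × ℝ → ℝ)
    (z : (Fin n → ℝ) × ℝ) : ℝ :=
  fderiv ℝ f z (0, 1)

/-- For `η^s = −Φ_s/Φ_u` and any smooth `G`, one has
`G_s + η^s G_u − η^s_n − η^s_u G = (1/Φ_u)(∂_s − (Φ_s/Φ_u)∂_u)(Φ_n + Φ_u G)`;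
consequently the system `η^s_n + η^s_u G = G_s + η^s G_u` holds iff
`Ψ = Φ_n + Φ_u G` satisfies `(∂_s − (Φ_s/Φ_u)∂_u)Ψ = 0` for all `s`. -/
theorem stmt8 {m p : ℕ} (hp : p ≤ m + 1)
    (U : Set ((Fin (m + 1) → ℝ) × ℝ)) (hU : IsOpen U)
    (Φ G : (Fin (m + 1) → ℝ) × ℝ → ℝ)
    (hΦ : ContDiffOn ℝ (⊤ : ℕ∞) Φ U) (hG : ContDiffOn ℝ (⊤ : ℕ∞) G U)
    (hΦu : ∀ z ∈ U, pdu Φ z ≠ 0)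
    (η : Fin p → (Fin (m + 1) → ℝ) × ℝ → ℝ)
    (hη : ∀ s z, η s z = -(pdx (Fin.castLE hp s) Φ z) / pdu Φ z) :
    (∀ z ∈ U, ∀ s : Fin p,
        pdx (Fin.castLE hp s) G z + η s z * pdu G z
            - pdx (Fin.last m) (η s) z - pdu (η s) z * G z
          = (1 / pdu Φ z) *
              (pdx (Fin.castLE hp s) (fun w => pdx (Fin.last m) Φ w + pdu Φ w * G w) z
                - (pdx (Fin.castLE hp s) Φ z / pdu Φ z) *
                    pdu (fun w => pdx (Fin.last m) Φ w + pdu Φ w * G w) z))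
      ∧ ((∀ z ∈ U, ∀ s : Fin p,
            pdx (Fin.last m) (η s) z + pdu (η s) z * G z
              = pdx (Fin.castLE hp s) G z + η s z * pdu G z)
          ↔ (∀ z ∈ U, ∀ s : Fin p,
              pdx (Fin.castLE hp s) (fun w => pdx (Fin.last m) Φ w + pdu Φ w * G w) z
                - (pdx (Fin.castLE hp s) Φ z / pdu Φ z) *
                    pdu (fun w => pdx (Fin.last m) Φ w + pdu Φ w * G w) z = 0)) := by
  have key : ∀ z ∈ U, ∀ s : Fin p,
      pdx (Fin.castLE hp s) G z + η s z * pdu G z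
          - pdx (Fin.last m) (η s) z - pdu (η s) z * G z
        = (1 / pdu Φ z) *
            (pdx (Fin.castLE hp s) (fun w => pdx (Fin.last m) Φ w + pdu Φ w * G w) z
              - (pdx (Fin.castLE hp s) Φ z / pdu Φ z) *
                  pdu (fun w => pdx (Fin.last m) Φ w + pdu Φ w * G w) z) := by
    intro z hz s
    have hΦz : ContDiffAt ℝ (⊤ : ℕ∞) Φ z := hΦ.contDiffAt (hU.mem_nhds hz)
    have hGz : ContDiffAt ℝ (⊤ : ℕ∞) G z := hG.contDiffAt (hU.mem_nhds hz)
    set e1 : (Fin (m + 1) → ℝ) × ℝ := (Pi.single (Fin.castLE hp s) 1, 0) with he1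
    set en : (Fin (m + 1) → ℝ) × ℝ := (Pi.single (Fin.last m) 1, 0) with hen
    set eu : (Fin (m + 1) → ℝ) × ℝ := (0, 1) with heu
    have hd' : DifferentiableAt ℝ (fderiv ℝ Φ) z :=
      (hΦz.fderiv_right (m := 1) (WithTop.coe_le_coe.mpr le_top)).differentiableAt one_ne_zero
    have hd : HasFDerivAt (fderiv ℝ Φ) (fderiv ℝ (fderiv ℝ Φ) z) z := hd'.hasFDerivAt
    set H : ((Fin (m + 1) → ℝ) × ℝ) →L[ℝ] ((Fin (m + 1) → ℝ) × ℝ) →L[ℝ] ℝ :=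
      fderiv ℝ (fderiv ℝ Φ) z with hH
    have hsym : ∀ v w, H v w = H w v := hΦz.isSymmSndFDerivAt (by rw [minSmoothness_of_isRCLikeNormedField]; exact WithTop.coe_le_coe.mpr le_top)
    have hGd : DifferentiableAt ℝ G z := hGz.differentiableAt (by simp)
    have hG' : HasFDerivAt G (fderiv ℝ G z) z := hGd.hasFDerivAt
    -- directional derivative functions
    have hA : HasFDerivAt (fun w => fderiv ℝ Φ w e1) (H.flip e1) z := by
      have := hd.clm_apply (hasFDerivAt_const e1 z)
      simpa using this
    have hB : HasFDerivAt (fun w => fderiv ℝ Φ w eu) (H.flip eu) z := by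
      have := hd.clm_apply (hasFDerivAt_const eu z)
      simpa using this
    have hN : HasFDerivAt (fun w => fderiv ℝ Φ w en) (H.flip en) z := by
      have := hd.clm_apply (hasFDerivAt_const en z)
      simpa using this
    have hBz : fderiv ℝ Φ z eu ≠ 0 := hΦu z hz
    -- derivative of η s
    have hηfun : η s = fun w => -(fderiv ℝ Φ w e1) * (fderiv ℝ Φ w eu)⁻¹ := by
      funext w
      rw [hη s w, div_eq_mul_inv]
      rfl
    have hBinv : HasFDerivAt (fun w => (fderiv ℝ Φ w eu)⁻¹)
        (-((fderiv ℝ Φ z eu) ^ 2)⁻¹ • H.flip eu) z :=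
      (hasDerivAt_inv hBz).comp_hasFDerivAt z hB
    have hηd : HasFDerivAt (η s)
        ((-(fderiv ℝ Φ z e1)) • (-((fderiv ℝ Φ z eu) ^ 2)⁻¹ • H.flip eu)
          + (fderiv ℝ Φ z eu)⁻¹ • (-(H.flip e1))) z := by
      rw [hηfun]
      exact hA.neg.mul hBinv
    -- derivative of Ψ
    have hΨ : HasFDerivAt (fun w => fderiv ℝ Φ w en + fderiv ℝ Φ w eu * G w)
        (H.flip en + ((fderiv ℝ Φ z eu) • fderiv ℝ G z + G z • H.flip eu)) z :=
      hN.add (hB.mul hG')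
    set a : ℝ := fderiv ℝ Φ z e1 with ha
    set b : ℝ := fderiv ℝ Φ z eu with hb
    have Eηn : pdx (Fin.last m) (η s) z
        = (-a) * (-((b) ^ 2)⁻¹ * H en eu) + b⁻¹ * (-(H en e1)) := by
      simp only [pdx]
      rw [hηd.fderiv]
      simp [ContinuousLinearMap.add_apply, ContinuousLinearMap.smul_apply,
        ContinuousLinearMap.neg_apply, ContinuousLinearMap.flip_apply, smul_eq_mul]
      rfl
    have Eηu : pdu (η s) z
        = (-a) * (-((b) ^ 2)⁻¹ * H eu eu) + b⁻¹ * (-(H eu e1)) := by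
      simp only [pdu]
      rw [hηd.fderiv]
      simp [ContinuousLinearMap.add_apply, ContinuousLinearMap.smul_apply,
        ContinuousLinearMap.neg_apply, ContinuousLinearMap.flip_apply, smul_eq_mul]
      rfl
    have EΨs : pdx (Fin.castLE hp s) (fun w => pdx (Fin.last m) Φ w + pdu Φ w * G w) z
        = H e1 en + (b * fderiv ℝ G z e1 + G z * H e1 eu) := by
      simp only [pdx, pdu]
      rw [hΨ.fderiv]
      simp [ContinuousLinearMap.add_apply, ContinuousLinearMap.smul_apply,
        ContinuousLinearMap.flip_apply, smul_eq_mul]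
      rfl
    have EΨu : pdu (fun w => pdx (Fin.last m) Φ w + pdu Φ w * G w) z
        = H eu en + (b * fderiv ℝ G z eu + G z * H eu eu) := by
      simp only [pdx, pdu]
      rw [hΨ.fderiv]
      simp [ContinuousLinearMap.add_apply, ContinuousLinearMap.smul_apply,
        ContinuousLinearMap.flip_apply, smul_eq_mul]
      rfl
    have Eη : η s z = -a / b := hη s z
    have EGs : pdx (Fin.castLE hp s) G z = fderiv ℝ G z e1 := rfl
    have EGu : pdu G z = fderiv ℝ G z eu := rfl
    have EΦs : pdx (Fin.castLE hp s) Φ z = a := rfl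
    have EΦu : pdu Φ z = b := rfl
    rw [Eηn, Eηu, EΨs, EΨu, Eη, EGs, EGu, EΦs, EΦu]
    have h1 : H en e1 = H e1 en := hsym en e1
    have h2 : H eu e1 = H e1 eu := hsym eu e1
    have h3 : H eu en = H en eu := hsym eu en
    rw [h1, h2, h3]
    have hbz : b ≠ 0 := hBz
    field_simp
    ring
  refine ⟨key, ?_, ?_⟩
  · intro h z hz s
    have h1 := key z hz s
    have h2 := h z hz s
    have hu := hΦu z hz
    have h3 : (1 / pdu Φ z) *
        (pdx (Fin.castLE hp s) (fun w => pdx (Fin.last m) Φ w + pdu Φ w * G w) z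
          - (pdx (Fin.castLE hp s) Φ z / pdu Φ z) *
              pdu (fun w => pdx (Fin.last m) Φ w + pdu Φ w * G w) z) = 0 := by
      rw [← h1]; linarith
    rcases mul_eq_zero.1 h3 with h4 | h4
    · exact absurd h4 (one_div_ne_zero hu)
    · exact h4
  · intro h z hz s
    have h1 := key z hz s
    have h2 := h z hz s
    rw [h2, mul_zero] at h1
    linarith
end
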